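/- Let α > 0, φ ∈ ω_{α,loc}, X a complex Banach space and T a bounded linear operator on X such that ‖Δ^{-α}𝒯(n)‖ ≤ C·φ(n) for all n ∈ ℕ₀ and some C > 0, and let θ(f) := ∑_{n=0}^∞ W^α f(n)·Δ^{-α}𝒯(n) for finitely supported f : ℕ₀ → ℂ. Then for every finitely supported f and every x ∈ X: T·θ(Δf)x = (I − T)·θ(f)x − f(0)·x, where Δf(n) = f(n+1) − f(n). -/

import Mathlib

/-- The Cesàro kernel `k^α(n) = Γ(n+α)/(Γ(α)·Γ(n+1))`. -/
noncomputable def cesK (α : ℝ) (n : ℕ) : ℝ :=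
  Real.Gamma ((n : ℝ) + α) / (Real.Gamma α * Real.Gamma ((n : ℝ) + 1))

/-- `φ` belongs to the class `ω_{α,loc}` with constant `c`. -/
def omegaLoc (α : ℝ) (φ : ℕ → ℝ) (c : ℝ) : Prop :=
  ∀ j p : ℕ, 1 ≤ j → j ≤ p →
    ((∑ n ∈ Finset.range (j + 1), cesK α n * φ (j + p - n)) +
        ∑ n ∈ Finset.Icc (p + 1) (j + p), cesK α n * φ (j + p - n)) ≤ c * (φ j * φ p)

/-- The Weyl sum of order `α`: `W^{-α}f(n) = ∑_{j=n}^∞ k^α(j-n)·f(j)`. -/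
noncomputable def weylSum (α : ℝ) (f : ℕ → ℂ) : ℕ → ℂ :=
  fun n => ∑ᶠ j : ℕ, (cesK α j : ℂ) * f (j + n)

/-- The forward difference operator `Δh(n) = h(n+1) - h(n)`. -/
def fdiff (f : ℕ → ℂ) : ℕ → ℂ := fun n => f (n + 1) - f n

/-- The Weyl difference of order `α > 0`:
`W^α f(n) = (-1)^m Δ^m W^{-(m-α)} f(n)` with `m = [α]+1`; and `W^0 f = f`. -/
noncomputable def weylDiff (α : ℝ) (f : ℕ → ℂ) : ℕ → ℂ :=
  if α = 0 then f
  else fun n => (-1 : ℂ) ^ (⌊α⌋₊ + 1) * fdiff^[⌊α⌋₊ + 1] (weylSum ((⌊α⌋₊ : ℝ) + 1 - α) f) n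

/-- The Cesàro sum of order `α` of a bounded operator `T`:
`Δ^{-α}𝒯(n) = ∑_{j=0}^n k^α(n-j)·T^j`. -/
noncomputable def cesOp {X : Type*} [NormedAddCommGroup X] [NormedSpace ℂ X]
    (α : ℝ) (T : X →L[ℂ] X) (n : ℕ) : X →L[ℂ] X :=
  ∑ j ∈ Finset.range (n + 1), (cesK α (n - j) : ℂ) • T ^ j

/-- The algebra homomorphism `θ(f) = ∑_{n=0}^∞ W^α f(n)·Δ^{-α}𝒯(n)`. -/
noncomputable def theta {X : Type*} [NormedAddCommGroup X] [NormedSpace ℂ X]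
    (α : ℝ) (T : X →L[ℂ] X) (f : ℕ → ℂ) : X →L[ℂ] X :=
  ∑ᶠ n : ℕ, weylDiff α f n • cesOp α T n

/-!
For finitely supported `f`, the Weyl sum `W^{-α}` inverts `W^α`. Indeed `k^α(n)` is the multiset
coefficient `α(α+1)⋯(α+n-1)/n!`, so the Chu–Vandermonde identity makes the Weyl sums a semigroup,
`W^{-a} W^{-b} = W^{-(a+b)}`; they commute with `Δ`, and `Δ W^{-1} f = -f` by telescoping. With
`m = ⌊α⌋ + 1` this gives `W^{-α} W^α f = (-1)^m Δ^m W^{-m} f = f`. Exchanging the order of summation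
in `θ(f) = ∑ₙ W^α f(n) ∑_{j ≤ n} k^α(n-j) T^j` therefore yields `θ(f) = ∑ⱼ f(j) T^j`, and the
identity becomes a telescoping sum.
-/

open Finset Function

-- Chu–Vandermonde at `-r` and `-s`, as `choose (-r) n = (-1)ⁿ • multichoose r n`.
theorem Ring.multichoose_add {R : Type*} [CommRing R] [BinomialRing R] (r s : R) (n : ℕ) :
    Ring.multichoose (r + s) n =
      ∑ ij ∈ antidiagonal n, Ring.multichoose r ij.1 * Ring.multichoose s ij.2 := by
  have h := Ring.add_choose_eq n (Commute.all (-r) (-s))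
  rw [← neg_add, Ring.choose_neg'] at h
  have hterm : ∀ ij ∈ antidiagonal n, Ring.choose (-r) ij.1 * Ring.choose (-s) ij.2 =
      Int.negOnePow n • (Ring.multichoose r ij.1 * Ring.multichoose s ij.2) := by
    intro ij hij
    rw [Ring.choose_neg', Ring.choose_neg', smul_mul_smul_comm, ← Int.negOnePow_add,
      ← Nat.cast_add, mem_antidiagonal.1 hij]
  rw [sum_congr rfl hterm, ← smul_sum] at h
  exact (smul_left_cancel_iff _).mp h

theorem Ring.natCast_succ_mul_multichoose_succ {R : Type*} [CommRing R] [BinomialRing R]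
    (r : R) (n : ℕ) :
    ((n : R) + 1) * Ring.multichoose r (n + 1) = (r + n) * Ring.multichoose r n := by
  have : IsAddTorsionFree R := BinomialRing.toIsAddTorsionFree
  apply nsmul_right_injective (Nat.factorial_ne_zero n)
  have h := Ring.factorial_nsmul_multichoose_eq_ascPochhammer r (n + 1)
  rw [ascPochhammer_succ_right, Polynomial.smeval_mul,
    ← Ring.factorial_nsmul_multichoose_eq_ascPochhammer, Nat.factorial_succ] at h
  simp only [Polynomial.smeval_add, Polynomial.smeval_X, Polynomial.smeval_natCast, pow_zero,
    pow_one, nsmul_eq_mul, mul_one, Nat.cast_mul, Nat.cast_succ] at h ⊢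
  linear_combination h

section CesaroKernel

variable {α : ℝ}

lemma natCast_succ_mul_cesK_succ (hα : 0 < α) (n : ℕ) :
    ((n : ℝ) + 1) * cesK α (n + 1) = (α + n) * cesK α n := by
  have hn : (n : ℝ) + α ≠ 0 := by positivity
  have hn1 : (n : ℝ) + 1 ≠ 0 := by positivity
  simp only [cesK, Nat.cast_succ, add_right_comm _ (1 : ℝ), Real.Gamma_add_one hn,
    Real.Gamma_add_one hn1]
  field_simp
  ring

lemma cesK_eq_multichoose (hα : 0 < α) (n : ℕ) : cesK α n = Ring.multichoose α n := by
  induction n with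
  | zero => simp [cesK, (Real.Gamma_pos_of_pos hα).ne']
  | succ n ih =>
    refine mul_left_cancel₀ (by positivity : (n : ℝ) + 1 ≠ 0) ?_
    rw [natCast_succ_mul_cesK_succ hα, ih, Ring.natCast_succ_mul_multichoose_succ]

lemma cesK_one (n : ℕ) : cesK 1 n = 1 := by
  rw [cesK_eq_multichoose one_pos, Ring.multichoose_one]

lemma cesK_add {a b : ℝ} (ha : 0 < a) (hb : 0 < b) (n : ℕ) :
    cesK (a + b) n = ∑ i ∈ range (n + 1), cesK a i * cesK b (n - i) := by
  simp only [cesK_eq_multichoose ha, cesK_eq_multichoose hb, cesK_eq_multichoose (add_pos ha hb),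
    Ring.multichoose_add, Nat.sum_antidiagonal_eq_sum_range_succ
      fun i j => Ring.multichoose a i * Ring.multichoose b j]

end CesaroKernel

lemma eq_zero_of_support_subset_Iio {M : Type*} [Zero M] {g : ℕ → M} {N m : ℕ}
    (hg : support g ⊆ Set.Iio N) (hm : N ≤ m) : g m = 0 :=
  support_subset_iff'.1 hg m (not_lt.2 hm)

lemma weylSum_eq_sum_range (α : ℝ) {f : ℕ → ℂ} {n M : ℕ} (hf : ∀ j, M ≤ j → f (j + n) = 0) :
    weylSum α f n = ∑ j ∈ range M, (cesK α j : ℂ) * f (j + n) := by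
  refine finsum_eq_finsetSum_of_support_subset _ fun j hj => ?_
  by_contra h
  simp only [coe_range, Set.mem_Iio, not_lt] at h
  exact hj (by simp [hf j h])

lemma weylSum_smul (α : ℝ) (c : ℂ) (f : ℕ → ℂ) : weylSum α (c • f) = c • weylSum α f := by
  funext n
  simp only [weylSum, Pi.smul_apply, smul_eq_mul, mul_finsum]
  exact finsum_congr fun j => mul_left_comm _ _ _

lemma fdiff_smul (c : ℂ) (f : ℕ → ℂ) : fdiff (c • f) = c • fdiff f := by
  funext n
  simp [fdiff, mul_sub]

section WeylSum

variable {α : ℝ} {f : ℕ → ℂ} {N : ℕ}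

lemma support_weylSum_subset (hf : support f ⊆ Set.Iio N) :
    support (weylSum α f) ⊆ Set.Iio N := by
  refine support_subset_iff'.2 fun n hn => ?_
  simp only [Set.mem_Iio, not_lt] at hn
  rw [weylSum_eq_sum_range α (M := 0) fun j _ => eq_zero_of_support_subset_Iio hf (by omega),
    sum_range_zero]

lemma support_fdiff_subset (hf : support f ⊆ Set.Iio N) : support (fdiff f) ⊆ Set.Iio N := by
  refine support_subset_iff'.2 fun n hn => ?_
  simp only [Set.mem_Iio, not_lt] at hn
  simp [fdiff, eq_zero_of_support_subset_Iio hf hn,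
    eq_zero_of_support_subset_Iio hf (Nat.le_succ_of_le hn)]

lemma support_iterate_fdiff_subset (hf : support f ⊆ Set.Iio N) (k : ℕ) :
    support (fdiff^[k] f) ⊆ Set.Iio N := by
  induction k with
  | zero => exact hf
  | succ k ih => rw [iterate_succ_apply']; exact support_fdiff_subset ih

lemma weylSum_fdiff (hf : support f ⊆ Set.Iio N) : weylSum α (fdiff f) = fdiff (weylSum α f) := by
  funext n
  have hfd := support_fdiff_subset hf
  rw [fdiff,
    weylSum_eq_sum_range α (M := N) fun j _ => eq_zero_of_support_subset_Iio hfd (by omega),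
    weylSum_eq_sum_range α (M := N) fun j _ => eq_zero_of_support_subset_Iio hf (by omega),
    weylSum_eq_sum_range α (M := N) fun j _ => eq_zero_of_support_subset_Iio hf (by omega),
    ← sum_sub_distrib]
  refine sum_congr rfl fun j _ => ?_
  rw [fdiff, ← add_assoc, mul_sub]

lemma weylSum_iterate_fdiff (hf : support f ⊆ Set.Iio N) (k : ℕ) :
    weylSum α (fdiff^[k] f) = fdiff^[k] (weylSum α f) := by
  induction k with
  | zero => rfl
  | succ k ih =>
    rw [iterate_succ_apply', iterate_succ_apply',
      weylSum_fdiff (support_iterate_fdiff_subset hf k), ih]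

lemma fdiff_weylSum_one (hf : support f ⊆ Set.Iio N) : fdiff (weylSum 1 f) = -f := by
  funext n
  have hfd := support_fdiff_subset hf
  rw [← weylSum_fdiff hf,
    weylSum_eq_sum_range 1 (M := N) fun j _ => eq_zero_of_support_subset_Iio hfd (by omega)]
  simp only [cesK_one, Complex.ofReal_one, one_mul, fdiff, add_right_comm _ n 1]
  rw [sum_range_sub (fun j => f (j + n)), eq_zero_of_support_subset_Iio hf (by omega : N ≤ N + n)]
  simp

lemma weylSum_weylSum {a b : ℝ} (ha : 0 < a) (hb : 0 < b) (hf : support f ⊆ Set.Iio N) :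
    weylSum a (weylSum b f) = weylSum (a + b) f := by
  funext n
  have hWf := support_weylSum_subset (α := b) hf
  calc weylSum a (weylSum b f) n
      = ∑ i ∈ range N, ∑ j ∈ range (N - i), (cesK a i : ℂ) * (cesK b j * f (j + i + n)) := by
        rw [weylSum_eq_sum_range a (M := N) fun j _ => eq_zero_of_support_subset_Iio hWf (by omega)]
        refine sum_congr rfl fun i hi => ?_
        rw [mem_range] at hi
        rw [weylSum_eq_sum_range b (M := N - i)
          fun j _ => eq_zero_of_support_subset_Iio hf (by omega), mul_sum]
        simp only [add_assoc]
    _ = ∑ s ∈ range N, ∑ i ∈ range (s + 1),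
          (cesK a i : ℂ) * (cesK b (s - i) * f (s - i + i + n)) :=
        (sum_range_diag_flip N _).symm
    _ = ∑ s ∈ range N, (cesK (a + b) s : ℂ) * f (s + n) := by
        refine sum_congr rfl fun s _ => ?_
        rw [cesK_add ha hb, Complex.ofReal_sum, sum_mul]
        refine sum_congr rfl fun i hi => ?_
        rw [Nat.sub_add_cancel (Nat.lt_succ_iff.1 (mem_range.1 hi))]
        push_cast
        ring
    _ = weylSum (a + b) f n :=
        (weylSum_eq_sum_range _ fun j _ => eq_zero_of_support_subset_Iio hf (by omega)).symm

lemma iterate_fdiff_weylSum_natCast_add_one (k : ℕ) (hf : support f ⊆ Set.Iio N) :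
    fdiff^[k + 1] (weylSum ((k : ℝ) + 1) f) = (-1 : ℂ) ^ (k + 1) • f := by
  induction k generalizing f with
  | zero => simpa using fdiff_weylSum_one hf
  | succ k ih =>
    rw [Nat.cast_succ, ← weylSum_weylSum (by positivity) one_pos hf, iterate_succ_apply',
      ih (support_weylSum_subset hf), fdiff_smul, fdiff_weylSum_one hf, pow_succ _ (k + 1)]
    simp

end WeylSum

section WeylDiff

variable {α : ℝ} {f : ℕ → ℂ} {N : ℕ}

lemma weylDiff_of_ne_zero (hα : α ≠ 0) (f : ℕ → ℂ) :
    weylDiff α f =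
      (-1 : ℂ) ^ (⌊α⌋₊ + 1) • fdiff^[⌊α⌋₊ + 1] (weylSum ((⌊α⌋₊ : ℝ) + 1 - α) f) := by
  rw [weylDiff, if_neg hα]
  rfl

lemma support_weylDiff_subset (hα : α ≠ 0) (hf : support f ⊆ Set.Iio N) :
    support (weylDiff α f) ⊆ Set.Iio N := by
  rw [weylDiff_of_ne_zero hα]
  exact (support_const_smul_subset _ _).trans
    (support_iterate_fdiff_subset (support_weylSum_subset hf) _)

lemma weylSum_weylDiff (hα : 0 < α) (hf : support f ⊆ Set.Iio N) :
    weylSum α (weylDiff α f) = f := by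
  have hβ : 0 < (⌊α⌋₊ : ℝ) + 1 - α := by linarith [Nat.lt_floor_add_one α]
  rw [weylDiff_of_ne_zero hα.ne', weylSum_smul,
    weylSum_iterate_fdiff (support_weylSum_subset hf), weylSum_weylSum hα hβ hf,
    add_sub_cancel, iterate_fdiff_weylSum_natCast_add_one _ hf, smul_smul, ← mul_pow]
  simp

end WeylDiff

section Theta

variable {X : Type*} [NormedAddCommGroup X] [NormedSpace ℂ X] {α : ℝ} {f : ℕ → ℂ} {N : ℕ}

lemma theta_eq_sum_range (hα : 0 < α) (hf : support f ⊆ Set.Iio N) (T : X →L[ℂ] X) :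
    theta α T f = ∑ j ∈ range N, f j • T ^ j := by
  have hW := support_weylDiff_subset hα.ne' hf
  calc theta α T f = ∑ n ∈ range N, weylDiff α f n • cesOp α T n := by
        refine finsum_eq_finsetSum_of_support_subset _ ?_
        rw [coe_range]
        exact (support_smul_subset_left _ _).trans hW
    _ = ∑ n ∈ range N, ∑ j ∈ range (n + 1),
          ((cesK α (n - j) : ℂ) * weylDiff α f (n - j + j)) • T ^ j := by
        refine sum_congr rfl fun n _ => ?_
        rw [cesOp, smul_sum]
        refine sum_congr rfl fun j hj => ?_
        rw [Nat.sub_add_cancel (Nat.lt_succ_iff.1 (mem_range.1 hj)), smul_smul, mul_comm]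
    _ = ∑ j ∈ range N, ∑ i ∈ range (N - j), ((cesK α i : ℂ) * weylDiff α f (i + j)) • T ^ j :=
        sum_range_diag_flip N fun j i => ((cesK α i : ℂ) * weylDiff α f (i + j)) • T ^ j
    _ = ∑ j ∈ range N, weylSum α (weylDiff α f) j • T ^ j := by
        refine sum_congr rfl fun j hj => ?_
        rw [mem_range] at hj
        rw [← sum_smul,
          weylSum_eq_sum_range α (M := N - j) fun i _ => eq_zero_of_support_subset_Iio hW (by omega)]
    _ = ∑ j ∈ range N, f j • T ^ j := by rw [weylSum_weylDiff hα hf]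

lemma mul_theta_fdiff (hα : 0 < α) (hf : support f ⊆ Set.Iio N) (T : X →L[ℂ] X) :
    T * theta α T (fdiff f) = (1 - T) * theta α T f - f 0 • 1 := by
  have hshift := sum_range_succ' (fun j => f j • T ^ j) N
  rw [sum_range_succ, eq_zero_of_support_subset_Iio hf le_rfl, zero_smul, add_zero,
    pow_zero] at hshift
  rw [theta_eq_sum_range hα (support_fdiff_subset hf), theta_eq_sum_range hα hf, mul_sum, sub_mul,
    one_mul, mul_sum]
  simp only [fdiff, sub_smul, mul_sub, mul_smul_comm, ← pow_succ', sum_sub_distrib]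
  rw [hshift]
  abel

end Theta

theorem stmt16_general {X : Type*} [NormedAddCommGroup X] [NormedSpace ℂ X]
    (α : ℝ) (hα : 0 < α) (T : X →L[ℂ] X)
    (f : ℕ → ℂ) (hf : (Function.support f).Finite) (x : X) :
    T (theta α T (fun n => f (n + 1) - f n) x) =
      (1 - T) (theta α T f x) - f 0 • x := by
  obtain ⟨N, hN⟩ := hf.toFinset.exists_nat_subset_range
  rw [hf.toFinset_subset, coe_range] at hN
  exact congr($(mul_theta_fdiff hα hN T) x)

theorem stmt16 {X : Type*} [NormedAddCommGroup X] [NormedSpace ℂ X] [CompleteSpace X]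
    (α : ℝ) (hα : 0 < α) (φ : ℕ → ℝ) (hφpos : ∀ n, 0 < φ n) (c : ℝ) (hc : 0 < c)
    (hφ : omegaLoc α φ c) (T : X →L[ℂ] X) (C : ℝ) (hC : 0 < C)
    (hT : ∀ n : ℕ, ‖cesOp α T n‖ ≤ C * φ n)
    (f : ℕ → ℂ) (hf : (Function.support f).Finite) (x : X) :
    T (theta α T (fun n => f (n + 1) - f n) x) =
      (1 - T) (theta α T f x) - f 0 • x :=
  stmt16_general α hα T f hf x
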